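/- In the discrete lm-SCM for the motivating example (Figure 1c), under Positivity, the context-parameterized AIPW score is robust to misspecification of the propensity model: for arbitrary functions π̃₁ : 𝒲 × 𝒴₀ → ℝ and π̃₀ : 𝒲 → ℝ taking values strictly between 0 and 1, with the true outcome regressions of the Nuisance functions, E[ (Q_R(1) − Q_R(0)) + (A − π̃_R) / (π̃_R (1 − π̃_R)) · (Y₁ − Q_R(A)) ] = θ, where pointwise on Ω, Q_R(a) := if R = 1 then Q₁(W, Y₀, a) else Q₀(W, a), and π̃_R := if R = 1 then π̃₁(W, Y₀) else π̃₀(W). -/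

import Mathlib

open MeasureTheory ProbabilityTheory

/-- Conditional probability of `S` given the event `E`: `μ(S ∩ E) / μ(E)`. -/
noncomputable def cprob {Ω : Type*} [MeasurableSpace Ω] (μ : Measure Ω) (S E : Set Ω) : ENNReal :=
  μ (S ∩ E) / μ E

/-- Conditional expectation of `X` given the event `E`: `μ(E)⁻¹ * ∫_E X dμ`. -/
noncomputable def cexp {Ω : Type*} [MeasurableSpace Ω] (μ : Measure Ω) (X : Ω → ℝ) (E : Set Ω) : ℝ :=
  ((μ E).toReal)⁻¹ * ∫ ω in E, X ω ∂μ

/-! The context `X = (W, Y₀, R)` and the treatment `A` are measurable functions of the noises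
`W, U₀, U_R, U_A`, hence independent of `U_Y`, and on each cell `{X = x, A = a}` the outcome is
`Y₁ = κ x a U_Y` for the explicit outcome map `κ`. Freezing the cell gives
`∫_{X = x, A = a} Y₁ = μ(X = x, A = a) · E[κ x a U_Y]`; by positivity this identifies the true
regressions `Q_R(b)` with `E[κ x b U_Y]` at `x = X`. The residual `Y₁ - Q_R(A)` then integrates to
zero on every cell, so any weight that is a function of `(X, A)`, in particular the misspecified
inverse-propensity weight, kills it in expectation, while `E[Q_R(1) - Q_R(0)] = E[Y₁¹] - E[Y₁⁰]`
cell by cell. -/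

section Cells

variable {Ω ι β : Type*} [MeasurableSpace Ω] [MeasurableSpace ι] [MeasurableSpace β]
  {μ : Measure Ω} {Z : Ω → ι} {U : Ω → β}

theorem integral_eq_sum_setIntegral_preimage_singleton [Fintype ι] [MeasurableSingletonClass ι]
    (hZ : Measurable Z) {f : Ω → ℝ} (hf : ∀ i, IntegrableOn f (Z ⁻¹' {i}) μ) :
    ∫ ω, f ω ∂μ = ∑ i, ∫ ω in Z ⁻¹' {i}, f ω ∂μ := by
  rw [← integral_iUnion_fintype (fun i => hZ (measurableSet_singleton i))
    (fun i j hij => Set.disjoint_singleton.2 hij |>.preimage Z) hf, ← Set.preimage_iUnion,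
    Set.iUnion_singleton_eq_range, Set.range_id', Set.preimage_univ, setIntegral_univ]

theorem memLp_top_comp_of_finite [Finite ι] [MeasurableSingletonClass ι] [IsFiniteMeasure μ]
    (hZ : Measurable Z) (g : ι → ℝ) : MemLp (fun ω => g (Z ω)) ⊤ μ :=
  MemLp.of_discrete.comp_of_map hZ.aemeasurable

theorem setIntegral_preimage_comp_of_indepFun (hZ : Measurable Z) (hU : Measurable U)
    (hind : IndepFun Z U μ) {S : Set ι} (hS : MeasurableSet S) {h : β → ℝ} (hh : Measurable h) :
    ∫ ω in Z ⁻¹' S, h (U ω) ∂μ = μ.real (Z ⁻¹' S) * ∫ ω, h (U ω) ∂μ := by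
  have hprod := hind.integral_comp_mul_comp hZ.aemeasurable hU.aemeasurable
    (f := S.indicator 1) (g := h) (measurable_one.indicator hS).aestronglyMeasurable
    hh.aestronglyMeasurable
  have hindicator : (Z ⁻¹' S).indicator (fun ω => h (U ω)) = S.indicator 1 ∘ Z * h ∘ U := by
    ext ω; by_cases hω : Z ω ∈ S <;> simp [hω]
  rw [← integral_indicator (hZ hS), hindicator, hprod, ← integral_indicator_one (hZ hS)]
  rfl

theorem setIntegral_preimage_eq_of_indepFun (hZ : Measurable Z) (hU : Measurable U)
    (hind : IndepFun Z U μ) {S : Set ι} (hS : MeasurableSet S) {h : β → ℝ} (hh : Measurable h)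
    {Y : Ω → ℝ} (hY : Set.EqOn Y (h ∘ U) (Z ⁻¹' S)) :
    ∫ ω in Z ⁻¹' S, Y ω ∂μ = μ.real (Z ⁻¹' S) * ∫ ω, h (U ω) ∂μ := by
  rw [setIntegral_congr_fun (hZ hS) hY]
  exact setIntegral_preimage_comp_of_indepFun hZ hU hind hS hh

theorem setIntegral_preimage_singleton_of_indepFun [MeasurableSingletonClass ι]
    (hZ : Measurable Z) (hU : Measurable U) (hind : IndepFun Z U μ) {φ : ι → β → ℝ}
    (hφ : ∀ i, Measurable (φ i)) (i : ι) :
    ∫ ω in Z ⁻¹' {i}, φ (Z ω) (U ω) ∂μ = μ.real (Z ⁻¹' {i}) * ∫ ω, φ i (U ω) ∂μ :=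
  setIntegral_preimage_eq_of_indepFun hZ hU hind (measurableSet_singleton i) (hφ i)
    fun ω (hω : Z ω = i) => by simp [hω]

theorem setIntegral_preimage_singleton_comp [MeasurableSingletonClass ι] (hZ : Measurable Z)
    (g : ι → ℝ) (i : ι) : ∫ ω in Z ⁻¹' {i}, g (Z ω) ∂μ = μ.real (Z ⁻¹' {i}) * g i := by
  rw [setIntegral_congr_fun (g := fun _ => g i) (hZ (measurableSet_singleton i))
    fun ω (hω : Z ω = i) => by simp only [hω], setIntegral_const, smul_eq_mul]

theorem cexp_preimage_eq_of_indepFun [IsFiniteMeasure μ] (hZ : Measurable Z) (hU : Measurable U)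
    (hind : IndepFun Z U μ) {S : Set ι} (hS : MeasurableSet S) {h : β → ℝ} (hh : Measurable h)
    {Y : Ω → ℝ} (hY : Set.EqOn Y (h ∘ U) (Z ⁻¹' S)) (hpos : μ (Z ⁻¹' S) ≠ 0) :
    cexp μ Y (Z ⁻¹' S) = ∫ ω, h (U ω) ∂μ := by
  rw [cexp, setIntegral_preimage_eq_of_indepFun hZ hU hind hS hh hY, ← measureReal_def,
    inv_mul_cancel_left₀ ((measureReal_ne_zero_iff (measure_ne_top μ _)).2 hpos)]

end Cells

section AIPW

variable {Ω ι τ β : Type*} [MeasurableSpace Ω] [MeasurableSpace ι] [MeasurableSpace τ]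
  [MeasurableSingletonClass ι] [MeasurableSingletonClass τ] {μ : Measure Ω} [IsFiniteMeasure μ]
  {X : Ω → ι} {A : Ω → τ} {U : Ω → β} {κ : ι → τ → β → ℝ}

/-- When `(X, A)` is independent of `U`, this is the regression `E[κ X b U | X = x]` of the
potential outcome under treatment `b` on the context. -/
noncomputable def outcomeRegression (μ : Measure Ω) (U : Ω → β) (κ : ι → τ → β → ℝ) (x : ι)
    (b : τ) : ℝ :=
  ∫ ω, κ x b (U ω) ∂μ

theorem cexp_cell_eq_outcomeRegression [MeasurableSpace β] (hXA : Measurable fun ω => (X ω, A ω))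
    (hU : Measurable U) (hind : IndepFun (fun ω => (X ω, A ω)) U μ)
    (hκ : ∀ x b, Measurable (κ x b)) {Y : Ω → ℝ} (hY : ∀ ω, Y ω = κ (X ω) (A ω) (U ω))
    {x : ι} {a : τ} (hpos : μ ((fun ω => (X ω, A ω)) ⁻¹' {(x, a)}) ≠ 0) :
    cexp μ Y ((fun ω => (X ω, A ω)) ⁻¹' {(x, a)}) = outcomeRegression μ U κ x a :=
  cexp_preimage_eq_of_indepFun hXA hU hind (measurableSet_singleton _) (hκ x a)
    (fun ω (hω : (X ω, A ω) = (x, a)) => by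
      obtain ⟨hx, ha⟩ := Prod.mk.inj hω
      simp only [hY, hx, ha, Function.comp_apply]) hpos

variable [Fintype ι] [Fintype τ]

theorem integral_outcomeRegression_eq [MeasurableSpace β] (hXA : Measurable fun ω => (X ω, A ω))
    (hU : Measurable U) (hind : IndepFun (fun ω => (X ω, A ω)) U μ)
    (hκ : ∀ x b, Measurable (κ x b)) (b : τ) (hYb : Integrable (fun ω => κ (X ω) b (U ω)) μ) :
    ∫ ω, outcomeRegression μ U κ (X ω) b ∂μ = ∫ ω, κ (X ω) b (U ω) ∂μ := by
  have hM := (memLp_top_comp_of_finite (μ := μ) hXA fun z =>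
    outcomeRegression μ U κ z.1 b).integrable le_top
  rw [integral_eq_sum_setIntegral_preimage_singleton hXA fun _ => hM.integrableOn,
    integral_eq_sum_setIntegral_preimage_singleton hXA fun _ => hYb.integrableOn]
  refine Finset.sum_congr rfl fun z _ => ?_
  rw [setIntegral_preimage_singleton_of_indepFun hXA hU hind (φ := fun z => κ z.1 b)
      (fun z => hκ z.1 b) z,
    setIntegral_preimage_singleton_comp hXA (fun z => outcomeRegression μ U κ z.1 b)]
  rfl

theorem integrable_mul_sub_outcomeRegression (hXA : Measurable fun ω => (X ω, A ω))
    (H : ι → τ → ℝ) (hY : Integrable (fun ω => κ (X ω) (A ω) (U ω)) μ) :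
    Integrable (fun ω => H (X ω) (A ω) *
      (κ (X ω) (A ω) (U ω) - outcomeRegression μ U κ (X ω) (A ω))) μ := by
  have hM := (memLp_top_comp_of_finite (μ := μ) hXA fun z =>
    outcomeRegression μ U κ z.1 z.2).integrable le_top
  exact (hY.sub hM).mul_of_top_right (memLp_top_comp_of_finite hXA fun z => H z.1 z.2)

theorem integral_mul_sub_outcomeRegression_eq_zero [MeasurableSpace β]
    (hXA : Measurable fun ω => (X ω, A ω)) (hU : Measurable U)
    (hind : IndepFun (fun ω => (X ω, A ω)) U μ) (hκ : ∀ x b, Measurable (κ x b)) (H : ι → τ → ℝ)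
    (hY : Integrable (fun ω => κ (X ω) (A ω) (U ω)) μ) :
    ∫ ω, H (X ω) (A ω) * (κ (X ω) (A ω) (U ω) - outcomeRegression μ U κ (X ω) (A ω)) ∂μ = 0 := by
  rw [integral_eq_sum_setIntegral_preimage_singleton hXA fun _ =>
    (integrable_mul_sub_outcomeRegression hXA H hY).integrableOn]
  refine Finset.sum_eq_zero fun z _ => ?_
  have hcell := hXA (measurableSet_singleton z)
  rw [setIntegral_congr_fun hcell (g := fun ω => H z.1 z.2 *
      (κ (X ω) (A ω) (U ω) - outcomeRegression μ U κ z.1 z.2)) fun ω (hω : (X ω, A ω) = z) => by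
      simp only [← hω],
    integral_const_mul, integral_sub hY.integrableOn integrableOn_const,
    setIntegral_preimage_singleton_of_indepFun hXA hU hind (φ := fun z => κ z.1 z.2)
      (fun z => hκ z.1 z.2) z, setIntegral_const, smul_eq_mul, outcomeRegression, sub_self,
    mul_zero]

theorem integral_aipw_eq [MeasurableSpace β] (hXA : Measurable fun ω => (X ω, A ω))
    (hU : Measurable U) (hind : IndepFun (fun ω => (X ω, A ω)) U μ)
    (hκ : ∀ x b, Measurable (κ x b)) (H : ι → τ → ℝ) (b₁ b₀ : τ)
    (hY : Integrable (fun ω => κ (X ω) (A ω) (U ω)) μ)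
    (hY₁ : Integrable (fun ω => κ (X ω) b₁ (U ω)) μ)
    (hY₀ : Integrable (fun ω => κ (X ω) b₀ (U ω)) μ) :
    ∫ ω, (outcomeRegression μ U κ (X ω) b₁ - outcomeRegression μ U κ (X ω) b₀ +
      H (X ω) (A ω) * (κ (X ω) (A ω) (U ω) - outcomeRegression μ U κ (X ω) (A ω))) ∂μ =
      ∫ ω, κ (X ω) b₁ (U ω) ∂μ - ∫ ω, κ (X ω) b₀ (U ω) ∂μ := by
  have hM : ∀ b, Integrable (fun ω => outcomeRegression μ U κ (X ω) b) μ := fun b =>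
    (memLp_top_comp_of_finite hXA fun z => outcomeRegression μ U κ z.1 b).integrable le_top
  have hMdiff : Integrable (fun ω => outcomeRegression μ U κ (X ω) b₁ -
      outcomeRegression μ U κ (X ω) b₀) μ := (hM b₁).sub (hM b₀)
  rw [integral_add hMdiff (integrable_mul_sub_outcomeRegression hXA H hY),
    integral_sub (hM b₁) (hM b₀), integral_outcomeRegression_eq hXA hU hind hκ b₁ hY₁,
    integral_outcomeRegression_eq hXA hU hind hκ b₀ hY₀,
    integral_mul_sub_outcomeRegression_eq_zero hXA hU hind hκ H hY, add_zero]

end AIPW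

theorem ProbabilityTheory.iIndep.indep_biSup_of_notMem {Ω ι : Type*} {mΩ : MeasurableSpace Ω}
    {μ : Measure Ω} {m : ι → MeasurableSpace Ω} (h_le : ∀ i, m i ≤ mΩ) (h : iIndep m μ)
    {S : Set ι} {j : ι} (hj : j ∉ S) : Indep (⨆ i ∈ S, m i) (m j) μ := by
  simpa using indep_iSup_of_disjoint h_le h (Set.disjoint_singleton_right.2 hj)

section LmSCM

variable {Ω 𝒲 𝒴₀ 𝒰₀ 𝒰R 𝒰A 𝒰Y : Type*} [MeasurableSpace 𝒲]
  [MeasurableSpace 𝒴₀] [MeasurableSpace 𝒰₀] [MeasurableSpace 𝒰R] [MeasurableSpace 𝒰A]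
  [MeasurableSpace 𝒰Y]

def lmOutcome (fY : 𝒲 × 𝒴₀ × Fin 2 × 𝒰Y → ℝ) (gY : 𝒲 × Fin 2 × 𝒰Y → ℝ)
    (x : 𝒲 × 𝒴₀ × Fin 2) (b : Fin 2) (u : 𝒰Y) : ℝ :=
  if x.2.2 = 1 then fY (x.1, x.2.1, b, u) else gY (x.1, b, u)

theorem measurable_lmOutcome {fY : 𝒲 × 𝒴₀ × Fin 2 × 𝒰Y → ℝ} {gY : 𝒲 × Fin 2 × 𝒰Y → ℝ}
    (hfY : Measurable fY) (hgY : Measurable gY) (x : 𝒲 × 𝒴₀ × Fin 2) (b : Fin 2) :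
    Measurable (lmOutcome fY gY x b) := by
  unfold lmOutcome
  split_ifs <;> fun_prop

theorem lmSCM_measurable_cell {m : MeasurableSpace Ω}
    {W : Ω → 𝒲} {U₀ : Ω → 𝒰₀} {UR : Ω → 𝒰R} {UA : Ω → 𝒰A}
    (hW : Measurable[m] W) (hU₀ : Measurable[m] U₀) (hUR : Measurable[m] UR)
    (hUA : Measurable[m] UA)
    {f₀ : 𝒲 × 𝒰₀ → 𝒴₀} (hf₀ : Measurable f₀) {fR : 𝒲 × 𝒰R → Fin 2} (hfR : Measurable fR)
    {fA : 𝒲 × 𝒴₀ × 𝒰A → Fin 2} (hfA : Measurable fA) {gA : 𝒲 × 𝒰A → Fin 2}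
    (hgA : Measurable gA) {Y₀ : Ω → 𝒴₀} {R A : Ω → Fin 2}
    (hY₀ : ∀ ω, Y₀ ω = f₀ (W ω, U₀ ω)) (hR : ∀ ω, R ω = fR (W ω, UR ω))
    (hA : ∀ ω, A ω = if R ω = 1 then fA (W ω, Y₀ ω, UA ω) else gA (W ω, UA ω)) :
    Measurable[m] (fun ω => ((W ω, Y₀ ω, R ω), A ω)) := by
  have hY₀m : Measurable[m] Y₀ := by
    rw [funext hY₀]; exact hf₀.comp (hW.prodMk hU₀)
  have hRm : Measurable[m] R := by
    rw [funext hR]; exact hfR.comp (hW.prodMk hUR)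
  have hAm : Measurable[m] A := by
    rw [funext hA]
    exact Measurable.ite (hRm (measurableSet_singleton 1))
      (hfA.comp (hW.prodMk (hY₀m.prodMk hUA))) (hgA.comp (hW.prodMk hUA))
  exact (hW.prodMk (hY₀m.prodMk hRm)).prodMk hAm

theorem lmSCM_indepFun_cell [MeasurableSpace Ω]
    {μ : Measure Ω} {W : Ω → 𝒲} {U₀ : Ω → 𝒰₀} {UR : Ω → 𝒰R} {UA : Ω → 𝒰A} {UY : Ω → 𝒰Y}
    (hW : Measurable W) (hU₀ : Measurable U₀) (hUR : Measurable UR)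
    (hUA : Measurable UA) (hUY : Measurable UY)
    (hIndep : iIndep
      (![MeasurableSpace.comap W inferInstance, MeasurableSpace.comap U₀ inferInstance,
         MeasurableSpace.comap UR inferInstance, MeasurableSpace.comap UA inferInstance,
         MeasurableSpace.comap UY inferInstance] : Fin 5 → MeasurableSpace Ω) μ)
    {f₀ : 𝒲 × 𝒰₀ → 𝒴₀} (hf₀ : Measurable f₀) {fR : 𝒲 × 𝒰R → Fin 2} (hfR : Measurable fR)
    {fA : 𝒲 × 𝒴₀ × 𝒰A → Fin 2} (hfA : Measurable fA) {gA : 𝒲 × 𝒰A → Fin 2}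
    (hgA : Measurable gA) {Y₀ : Ω → 𝒴₀} {R A : Ω → Fin 2}
    (hY₀ : ∀ ω, Y₀ ω = f₀ (W ω, U₀ ω)) (hR : ∀ ω, R ω = fR (W ω, UR ω))
    (hA : ∀ ω, A ω = if R ω = 1 then fA (W ω, Y₀ ω, UA ω) else gA (W ω, UA ω)) :
    IndepFun (fun ω => ((W ω, Y₀ ω, R ω), A ω)) UY μ := by
  set mv : Fin 5 → MeasurableSpace Ω := ![MeasurableSpace.comap W inferInstance,
    MeasurableSpace.comap U₀ inferInstance, MeasurableSpace.comap UR inferInstance,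
    MeasurableSpace.comap UA inferInstance, MeasurableSpace.comap UY inferInstance]
  have h_le : ∀ i, mv i ≤ ‹MeasurableSpace Ω› := by
    intro i
    fin_cases i
    exacts [hW.comap_le, hU₀.comap_le, hUR.comap_le, hUA.comap_le, hUY.comap_le]
  have hnoise : ∀ i ∈ ({0, 1, 2, 3} : Set (Fin 5)),
      mv i ≤ ⨆ j ∈ ({0, 1, 2, 3} : Set (Fin 5)), mv j :=
    fun i hi => le_biSup mv hi
  have hZ := lmSCM_measurable_cell (Measurable.of_comap_le (hnoise 0 (by simp)))
    (Measurable.of_comap_le (hnoise 1 (by simp))) (Measurable.of_comap_le (hnoise 2 (by simp)))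
    (Measurable.of_comap_le (hnoise 3 (by simp))) hf₀ hfR hfA hgA hY₀ hR hA
  rw [IndepFun_iff_Indep]
  exact indep_of_indep_of_le_left (hIndep.indep_biSup_of_notMem h_le (j := 4) (by simp))
    hZ.comap_le

theorem lmSCM_regression_eq [MeasurableSpace Ω] [MeasurableSingletonClass 𝒲]
    [MeasurableSingletonClass 𝒴₀] [Fintype 𝒲] [Fintype 𝒴₀] {μ : Measure Ω} [IsFiniteMeasure μ]
    {W : Ω → 𝒲} {UY : Ω → 𝒰Y} {Y₀ : Ω → 𝒴₀} {R A : Ω → Fin 2} {Y₁ : Ω → ℝ}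
    (hXA : Measurable fun ω => ((W ω, Y₀ ω, R ω), A ω)) (hUY : Measurable UY)
    (hind : IndepFun (fun ω => ((W ω, Y₀ ω, R ω), A ω)) UY μ)
    {fY : 𝒲 × 𝒴₀ × Fin 2 × 𝒰Y → ℝ} (hfY : Measurable fY)
    {gY : 𝒲 × Fin 2 × 𝒰Y → ℝ} (hgY : Measurable gY)
    (hY₁ : ∀ ω, Y₁ ω = lmOutcome fY gY (W ω, Y₀ ω, R ω) (A ω) (UY ω))
    (hpos : ∀ (w : 𝒲) (y : 𝒴₀) (r a : Fin 2),
      0 < μ {ω | W ω = w ∧ Y₀ ω = y ∧ R ω = r ∧ A ω = a})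
    {Q1 : 𝒲 → 𝒴₀ → Fin 2 → ℝ}
    (hQ1 : ∀ (w : 𝒲) (y : 𝒴₀) (a : Fin 2),
      Q1 w y a = cexp μ Y₁ {ω | W ω = w ∧ Y₀ ω = y ∧ A ω = a ∧ R ω = 1})
    {Q0 : 𝒲 → Fin 2 → ℝ}
    (hQ0 : ∀ (w : 𝒲) (a : Fin 2), Q0 w a = cexp μ Y₁ {ω | W ω = w ∧ A ω = a ∧ R ω = 0})
    (ω : Ω) (b : Fin 2) :
    (if R ω = 1 then Q1 (W ω) (Y₀ ω) b else Q0 (W ω) b) =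
      outcomeRegression μ UY (lmOutcome fY gY) (W ω, Y₀ ω, R ω) b := by
  have hcell : ∀ w y r a, μ ((fun ω => ((W ω, Y₀ ω, R ω), A ω)) ⁻¹' {((w, y, r), a)}) ≠ 0 := by
    intro w y r a
    convert (hpos w y r a).ne' using 2
    ext; simp [and_assoc]
  split_ifs with hr
  · rw [hQ1, show {ω' | W ω' = W ω ∧ Y₀ ω' = Y₀ ω ∧ A ω' = b ∧ R ω' = 1} =
      (fun ω => ((W ω, Y₀ ω, R ω), A ω)) ⁻¹' {((W ω, Y₀ ω, 1), b)} by ext; simp; tauto, hr]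
    exact cexp_cell_eq_outcomeRegression hXA hUY hind (measurable_lmOutcome hfY hgY) hY₁
      (hcell _ _ _ _)
  -- On `{W = w, R = 0, A = b}` the outcome is `gY (w, b, U_Y)` whatever `Y₀` is, and this event
  -- contains the non-null cell `{X = (w, Y₀ ω, 0), A = b}`.
  · have hr0 : R ω = 0 := by omega
    set S : Set ((𝒲 × 𝒴₀ × Fin 2) × Fin 2) := {z | z.1.1 = W ω ∧ z.1.2.2 = 0 ∧ z.2 = b}
    have hS : {ω' | W ω' = W ω ∧ A ω' = b ∧ R ω' = 0} =
        (fun ω => ((W ω, Y₀ ω, R ω), A ω)) ⁻¹' S := by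
      ext; simp [S]; tauto
    rw [hQ0, hS, hr0]
    refine cexp_preimage_eq_of_indepFun hXA hUY hind S.toFinite.measurableSet
      (measurable_lmOutcome hfY hgY _ b) (fun ω' hω' => ?_) fun h0 => hcell (W ω) (Y₀ ω) 0 b ?_
    · obtain ⟨hw, hr, ha⟩ : W ω' = W ω ∧ R ω' = 0 ∧ A ω' = b := hω'
      simp [hY₁, lmOutcome, hw, hr, ha]
    · exact measure_mono_null (fun ω' (hω' : _ = _) => by simp_all [S]) h0

end LmSCM

theorem lmSCM_aipw_robust_propensity_misspecification_general
    {Ω 𝒲 𝒴₀ 𝒰₀ 𝒰R 𝒰A 𝒰Y : Type*}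
    [MeasurableSpace Ω]
    [Fintype 𝒲] [MeasurableSpace 𝒲] [MeasurableSingletonClass 𝒲]
    [Fintype 𝒴₀] [MeasurableSpace 𝒴₀] [MeasurableSingletonClass 𝒴₀]
    [MeasurableSpace 𝒰₀] [MeasurableSpace 𝒰R] [MeasurableSpace 𝒰A] [MeasurableSpace 𝒰Y]
    (μ : Measure Ω) [IsProbabilityMeasure μ]
    (W : Ω → 𝒲) (U₀ : Ω → 𝒰₀) (UR : Ω → 𝒰R) (UA : Ω → 𝒰A) (UY : Ω → 𝒰Y)
    (hW : Measurable W) (hU₀ : Measurable U₀) (hUR : Measurable UR)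
    (hUA : Measurable UA) (hUY : Measurable UY)
    (hIndep : iIndep
      (![MeasurableSpace.comap W inferInstance, MeasurableSpace.comap U₀ inferInstance,
         MeasurableSpace.comap UR inferInstance, MeasurableSpace.comap UA inferInstance,
         MeasurableSpace.comap UY inferInstance] : Fin 5 → MeasurableSpace Ω) μ)
    (f₀ : 𝒲 × 𝒰₀ → 𝒴₀) (hf₀ : Measurable f₀)
    (fR : 𝒲 × 𝒰R → Fin 2) (hfR : Measurable fR)
    (fA : 𝒲 × 𝒴₀ × 𝒰A → Fin 2) (hfA : Measurable fA)
    (gA : 𝒲 × 𝒰A → Fin 2) (hgA : Measurable gA)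
    (fY : 𝒲 × 𝒴₀ × Fin 2 × 𝒰Y → ℝ) (hfY : Measurable fY)
    (gY : 𝒲 × Fin 2 × 𝒰Y → ℝ) (hgY : Measurable gY)
    (Y₀ : Ω → 𝒴₀) (R A : Ω → Fin 2) (Y₁ : Ω → ℝ)
    (hY₀ : ∀ ω, Y₀ ω = f₀ (W ω, U₀ ω))
    (hR : ∀ ω, R ω = fR (W ω, UR ω))
    (hA : ∀ ω, A ω = if R ω = 1 then fA (W ω, Y₀ ω, UA ω) else gA (W ω, UA ω))
    (hY₁ : ∀ ω, Y₁ ω = if R ω = 1 then fY (W ω, Y₀ ω, A ω, UY ω) else gY (W ω, A ω, UY ω))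
    (Ynat : Fin 2 → Ω → ℝ)
    (hYnat : ∀ (a : Fin 2) (ω : Ω),
      Ynat a ω = if R ω = 1 then fY (W ω, Y₀ ω, a, UY ω) else gY (W ω, a, UY ω))
    (hIntY₁ : Integrable Y₁ μ)
    (hIntN0 : Integrable (Ynat 0) μ) (hIntN1 : Integrable (Ynat 1) μ)
    (hpos : ∀ (w : 𝒲) (y : 𝒴₀) (r a : Fin 2),
      0 < μ {ω | W ω = w ∧ Y₀ ω = y ∧ R ω = r ∧ A ω = a})
    (Q1 : 𝒲 → 𝒴₀ → Fin 2 → ℝ)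
    (hQ1 : ∀ (w : 𝒲) (y : 𝒴₀) (a : Fin 2),
      Q1 w y a = cexp μ Y₁ {ω | W ω = w ∧ Y₀ ω = y ∧ A ω = a ∧ R ω = 1})
    (Q0 : 𝒲 → Fin 2 → ℝ)
    (hQ0 : ∀ (w : 𝒲) (a : Fin 2), Q0 w a = cexp μ Y₁ {ω | W ω = w ∧ A ω = a ∧ R ω = 0})
    :
    ∀ (πt1 : 𝒲 → 𝒴₀ → ℝ) (πt0 : 𝒲 → ℝ),
      (∀ (w : 𝒲) (y : 𝒴₀), 0 < πt1 w y ∧ πt1 w y < 1) →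
      (∀ w : 𝒲, 0 < πt0 w ∧ πt0 w < 1) →
      ∫ ω, (((if R ω = 1 then Q1 (W ω) (Y₀ ω) 1 else Q0 (W ω) 1)
              - (if R ω = 1 then Q1 (W ω) (Y₀ ω) 0 else Q0 (W ω) 0))
            + (((A ω : ℕ) : ℝ) - (if R ω = 1 then πt1 (W ω) (Y₀ ω) else πt0 (W ω)))
                / ((if R ω = 1 then πt1 (W ω) (Y₀ ω) else πt0 (W ω))
                    * (1 - (if R ω = 1 then πt1 (W ω) (Y₀ ω) else πt0 (W ω))))
                * (Y₁ ω - (if R ω = 1 then Q1 (W ω) (Y₀ ω) (A ω) else Q0 (W ω) (A ω)))) ∂μ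
        = (∫ ω, Ynat 1 ω ∂μ) - (∫ ω, Ynat 0 ω ∂μ) := by
  intro πt1 πt0 _ _
  have hXA := lmSCM_measurable_cell hW hU₀ hUR hUA hf₀ hfR hfA hgA hY₀ hR hA
  have hind := lmSCM_indepFun_cell hW hU₀ hUR hUA hUY hIndep hf₀ hfR hfA hgA hY₀ hR hA
  have hY₁' : ∀ ω, Y₁ ω = lmOutcome fY gY (W ω, Y₀ ω, R ω) (A ω) (UY ω) := hY₁
  have hYnat' : ∀ b, Ynat b = fun ω => lmOutcome fY gY (W ω, Y₀ ω, R ω) b (UY ω) :=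
    fun b => funext (hYnat b)
  have hQ := lmSCM_regression_eq hXA hUY hind hfY hgY hY₁' hpos hQ1 hQ0
  let π : 𝒲 × 𝒴₀ × Fin 2 → ℝ := fun x => if x.2.2 = 1 then πt1 x.1 x.2.1 else πt0 x.1
  rw [hYnat' 1, hYnat' 0, ← integral_aipw_eq hXA hUY hind (measurable_lmOutcome hfY hgY)
    (fun x a => (((a : ℕ) : ℝ) - π x) / (π x * (1 - π x))) 1 0 (hIntY₁.congr (.of_forall hY₁'))
    (hYnat' 1 ▸ hIntN1) (hYnat' 0 ▸ hIntN0)]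
  congr 1 with ω
  simp only [hQ, hY₁']
  rfl

/-- In the discrete lm-SCM of Figure 1c, under positivity, the context-parameterized AIPW score is robust to misspecification of the propensity model. -/
theorem lmSCM_aipw_robust_propensity_misspecification
    {Ω 𝒲 𝒴₀ 𝒰₀ 𝒰R 𝒰A 𝒰Y : Type*}
    [MeasurableSpace Ω]
    [Fintype 𝒲] [Nonempty 𝒲] [MeasurableSpace 𝒲] [MeasurableSingletonClass 𝒲]
    [Fintype 𝒴₀] [Nonempty 𝒴₀] [MeasurableSpace 𝒴₀] [MeasurableSingletonClass 𝒴₀]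
    [MeasurableSpace 𝒰₀] [MeasurableSpace 𝒰R] [MeasurableSpace 𝒰A] [MeasurableSpace 𝒰Y]
    (μ : Measure Ω) [IsProbabilityMeasure μ]
    (W : Ω → 𝒲) (U₀ : Ω → 𝒰₀) (UR : Ω → 𝒰R) (UA : Ω → 𝒰A) (UY : Ω → 𝒰Y)
    (hW : Measurable W) (hU₀ : Measurable U₀) (hUR : Measurable UR)
    (hUA : Measurable UA) (hUY : Measurable UY)
    (hIndep : iIndep
      (![MeasurableSpace.comap W inferInstance, MeasurableSpace.comap U₀ inferInstance,
         MeasurableSpace.comap UR inferInstance, MeasurableSpace.comap UA inferInstance,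
         MeasurableSpace.comap UY inferInstance] : Fin 5 → MeasurableSpace Ω) μ)
    (f₀ : 𝒲 × 𝒰₀ → 𝒴₀) (hf₀ : Measurable f₀)
    (fR : 𝒲 × 𝒰R → Fin 2) (hfR : Measurable fR)
    (fA : 𝒲 × 𝒴₀ × 𝒰A → Fin 2) (hfA : Measurable fA)
    (gA : 𝒲 × 𝒰A → Fin 2) (hgA : Measurable gA)
    (fY : 𝒲 × 𝒴₀ × Fin 2 × 𝒰Y → ℝ) (hfY : Measurable fY)
    (gY : 𝒲 × Fin 2 × 𝒰Y → ℝ) (hgY : Measurable gY)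
    (Y₀ : Ω → 𝒴₀) (R A : Ω → Fin 2) (Y₁ : Ω → ℝ)
    (hY₀ : ∀ ω, Y₀ ω = f₀ (W ω, U₀ ω))
    (hR : ∀ ω, R ω = fR (W ω, UR ω))
    (hA : ∀ ω, A ω = if R ω = 1 then fA (W ω, Y₀ ω, UA ω) else gA (W ω, UA ω))
    (hY₁ : ∀ ω, Y₁ ω = if R ω = 1 then fY (W ω, Y₀ ω, A ω, UY ω) else gY (W ω, A ω, UY ω))
    (Ynat : Fin 2 → Ω → ℝ)
    (hYnat : ∀ (a : Fin 2) (ω : Ω),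
      Ynat a ω = if R ω = 1 then fY (W ω, Y₀ ω, a, UY ω) else gY (W ω, a, UY ω))
    (Yful : Fin 2 → Ω → ℝ)
    (hYful : ∀ (a : Fin 2) (ω : Ω), Yful a ω = fY (W ω, Y₀ ω, a, UY ω))
    (hIntY₁ : Integrable Y₁ μ)
    (hIntN0 : Integrable (Ynat 0) μ) (hIntN1 : Integrable (Ynat 1) μ)
    (hIntF0 : Integrable (Yful 0) μ) (hIntF1 : Integrable (Yful 1) μ)
    (hpos : ∀ (w : 𝒲) (y : 𝒴₀) (r a : Fin 2),
      0 < μ {ω | W ω = w ∧ Y₀ ω = y ∧ R ω = r ∧ A ω = a})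
    (Q1 : 𝒲 → 𝒴₀ → Fin 2 → ℝ)
    (hQ1 : ∀ (w : 𝒲) (y : 𝒴₀) (a : Fin 2),
      Q1 w y a = cexp μ Y₁ {ω | W ω = w ∧ Y₀ ω = y ∧ A ω = a ∧ R ω = 1})
    (Q0 : 𝒲 → Fin 2 → ℝ)
    (hQ0 : ∀ (w : 𝒲) (a : Fin 2), Q0 w a = cexp μ Y₁ {ω | W ω = w ∧ A ω = a ∧ R ω = 0})
    :
    ∀ (πt1 : 𝒲 → 𝒴₀ → ℝ) (πt0 : 𝒲 → ℝ),
      (∀ (w : 𝒲) (y : 𝒴₀), 0 < πt1 w y ∧ πt1 w y < 1) →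
      (∀ w : 𝒲, 0 < πt0 w ∧ πt0 w < 1) →
      ∫ ω, (((if R ω = 1 then Q1 (W ω) (Y₀ ω) 1 else Q0 (W ω) 1)
              - (if R ω = 1 then Q1 (W ω) (Y₀ ω) 0 else Q0 (W ω) 0))
            + (((A ω : ℕ) : ℝ) - (if R ω = 1 then πt1 (W ω) (Y₀ ω) else πt0 (W ω)))
                / ((if R ω = 1 then πt1 (W ω) (Y₀ ω) else πt0 (W ω))
                    * (1 - (if R ω = 1 then πt1 (W ω) (Y₀ ω) else πt0 (W ω))))
                * (Y₁ ω - (if R ω = 1 then Q1 (W ω) (Y₀ ω) (A ω) else Q0 (W ω) (A ω)))) ∂μ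
        = (∫ ω, Ynat 1 ω ∂μ) - (∫ ω, Ynat 0 ω ∂μ) :=
  lmSCM_aipw_robust_propensity_misspecification_general μ W U₀ UR UA UY hW hU₀ hUR hUA hUY hIndep f₀
    hf₀ fR hfR fA hfA gA hgA fY hfY gY hgY Y₀ R A Y₁ hY₀ hR hA hY₁ Ynat hYnat hIntY₁ hIntN0 hIntN1
    hpos Q1 hQ1 Q0 hQ0
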